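/- Let b be a c-block with at least 2 old-flow edges (|E(b ∩ F_c^o)| ≥ 2) and at least 2 update-flow edges (|E(b ∩ F_c^u)| ≥ 2). Then in any feasible update sequence, the updates of block b occupy at least 3 distinct rounds; if one of these edge counts is less than 2, at least 2 distinct rounds may still be required. -/

import Mathlib

/-!
A formal model of congestion-free flow rerouting (network update scheduling).
An update flow network consists of a source `s`, a terminal `t`, edge
capacities, and `k` update flow pairs, each given by an old `s`-`t` path and
an update (new) `s`-`t` path (represented as lists of vertices) with a demand.
An update sequence assigns to every update `(v, i)` (vertex `v`, pair `i`) a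
round; it is feasible if resolving all updates of earlier rounds together with
any subset of the current round always leaves, for every pair, a unique valid
(capacity-respecting) transient `s`-`t` path among the active edges, and the
family of transient paths jointly respects the capacities.
-/

namespace FlowUpdate

variable {V : Type} [DecidableEq V] {k : ℕ}

/-- The edges of a path given as a list of vertices. -/
def edgesOf (p : List V) : List (V × V) := p.zip p.tail

/-- The subpath of `p` from vertex `a` to vertex `z` (inclusive). -/
def segment (p : List V) (a z : V) : List V :=
  ((p.dropWhile (fun v => decide (v ≠ a))).takeWhile (fun v => decide (v ≠ z))) ++ [z]

/-- The outgoing edge of `v` on the path `p`, if any. -/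
def outEdge (p : List V) (v : V) : Option (V × V) :=
  (edgesOf p).find? (fun e => decide (e.1 = v))

/-- An update flow network with `k` update flow pairs. -/
structure UFN (V : Type) (k : ℕ) where
  s : V
  t : V
  cap : V → V → ℕ
  old : Fin k → List V
  new : Fin k → List V
  demand : Fin k → ℕ

namespace UFN

/-- After resolving the set of updates `U`, edge `e` is active for pair `i` iff
it is an old edge whose tail is not yet updated, or a new edge whose tail is
updated. -/
def active (G : UFN V k) (U : Set (V × Fin k)) (i : Fin k) (e : V × V) : Prop :=
  (e ∈ edgesOf (G.old i) ∧ (e.1, i) ∉ U) ∨ (e ∈ edgesOf (G.new i) ∧ (e.1, i) ∈ U)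

/-- `p` is a simple `s`-`t` path all of whose edges satisfy `E`. -/
def IsPathIn (E : V × V → Prop) (s t : V) (p : List V) : Prop :=
  p.head? = some s ∧ p.getLast? = some t ∧ List.Chain' (fun u v => E (u, v)) p ∧ p.Nodup

/-- `p` respects the capacities for the demand of pair `i`. -/
def ValidPath (G : UFN V k) (i : Fin k) (p : List V) : Prop :=
  ∀ e ∈ edgesOf p, G.demand i ≤ G.cap e.1 e.2

/-- `T` is the unique valid transient path of pair `i` after resolving `U`. -/
def TransientPair (G : UFN V k) (U : Set (V × Fin k)) (i : Fin k) (T : List V) : Prop :=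
  IsPathIn (G.active U i) G.s G.t T ∧ G.ValidPath i T ∧
    ∀ p, IsPathIn (G.active U i) G.s G.t p → G.ValidPath i p → p = T

/-- After resolving `U`, every pair has a unique valid transient path, and the
family of transient paths jointly respects the capacities. -/
def TransientFamily (G : UFN V k) (U : Set (V × Fin k)) : Prop :=
  ∃ T : Fin k → List V,
    (∀ i, G.TransientPair U i (T i)) ∧
    (∀ u v : V, (∑ i : Fin k, if (u, v) ∈ edgesOf (T i) then G.demand i else 0) ≤ G.cap u v)

/-- An update sequence (an assignment of rounds to all updates) is feasible if
after resolving all updates of rounds `< r` together with any subset of the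
updates of round `r`, all pairs admit a transient family. -/
def Feasible (G : UFN V k) (R : V × Fin k → ℕ) : Prop :=
  ∀ r : ℕ, ∀ S : Set (V × Fin k), (∀ u ∈ S, R u = r) →
    G.TransientFamily ({u | R u < r} ∪ S)

/-- `p` is a simple path from the source to the terminal. -/
def IsStPath (G : UFN V k) (p : List V) : Prop :=
  p.head? = some G.s ∧ p.getLast? = some G.t ∧ p.Nodup

/-- Well-formedness of an update flow network: all old and new flows are simple
`s`-`t` paths, each pair forms a DAG, each new path respects capacities for its
own demand, and both the old family and the new family jointly respect the
capacities. -/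
def WellFormed (G : UFN V k) : Prop :=
  (∀ i, G.IsStPath (G.old i) ∧ G.IsStPath (G.new i)) ∧
  (∀ i, ∃ ord : V → ℕ, ∀ e ∈ edgesOf (G.old i) ++ edgesOf (G.new i), ord e.1 < ord e.2) ∧
  (∀ i, G.ValidPath i (G.new i)) ∧
  (∀ u v : V, (∑ i : Fin k, if (u, v) ∈ edgesOf (G.old i) then G.demand i else 0) ≤ G.cap u v) ∧
  (∀ u v : V, (∑ i : Fin k, if (u, v) ∈ edgesOf (G.new i) then G.demand i else 0) ≤ G.cap u v)

/-- The common vertices of the old and new path of pair `i`, in path order. -/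
def commons (G : UFN V k) (i : Fin k) : List V :=
  (G.old i).filter (fun v => decide (v ∈ G.new i))

/-- A block of pair `i` is a pair `(a, z)` of consecutive common vertices of the
old and new paths of `i`. -/
def IsBlock (G : UFN V k) (i : Fin k) (b : V × V) : Prop :=
  b ∈ edgesOf (G.commons i)

/-- A (candidate) block: a pair index together with its start and end vertices. -/
abbrev Blk (V : Type) (k : ℕ) := Fin k × V × V

def IsBlk (G : UFN V k) (b : Blk V k) : Prop := G.IsBlock b.1 b.2

/-- The old-path segment of a block. -/
def blkOldSeg (G : UFN V k) (b : Blk V k) : List V := segment (G.old b.1) b.2.1 b.2.2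

/-- The update-path segment of a block. -/
def blkNewSeg (G : UFN V k) (b : Blk V k) : List V := segment (G.new b.1) b.2.1 b.2.2

/-- Block `b1` depends on block `b2` (written `b1 → b2`) if they belong to
different pairs and some edge lies on `b1`'s update path and on `b2`'s old path
with capacity less than the sum of the two demands. -/
def Dep (G : UFN V k) (b1 b2 : Blk V k) : Prop :=
  G.IsBlk b1 ∧ G.IsBlk b2 ∧ b1.1 ≠ b2.1 ∧
  ∃ e : V × V, e ∈ edgesOf (G.blkNewSeg b1) ∧ e ∈ edgesOf (G.blkOldSeg b2) ∧
    G.cap e.1 e.2 < G.demand b1.1 + G.demand b2.1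

/-- The dependency graph contains a directed cycle. -/
def HasDepCycle (G : UFN V k) : Prop := ∃ b : Blk V k, Relation.TransGen G.Dep b b

/-- The number of rounds used by an update sequence. -/
def numRounds [Fintype V] (R : V × Fin k → ℕ) : ℕ :=
  (Finset.image R Finset.univ).card

/-- An update `(v, i)` is empty if `v`'s outgoing old edge and outgoing new edge
for pair `i` coincide (in particular if `v` has no outgoing edge for pair `i`). -/
def EmptyUpd (G : UFN V k) (u : V × Fin k) : Prop :=
  outEdge (G.old u.2) u.1 = outEdge (G.new u.2) u.1

instance (G : UFN V k) (u : V × Fin k) : Decidable (G.EmptyUpd u) :=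
  inferInstanceAs (Decidable (outEdge (G.old u.2) u.1 = outEdge (G.new u.2) u.1))

/-- `R` updates every block in (at most) 3 consecutive rounds: first all internal
update-path vertices of the block, then the start vertex, then all old-path-only
vertices of the block. -/
def BlockPattern (G : UFN V k) (R : V × Fin k → ℕ) : Prop :=
  ∀ b : Blk V k, G.IsBlk b → ∃ r : ℕ,
    (∀ v ∈ G.blkNewSeg b, v ≠ b.2.1 → v ≠ b.2.2 → R (v, b.1) = r) ∧
    R (b.2.1, b.1) = r + 1 ∧
    (∀ v ∈ G.blkOldSeg b, v ∉ G.new b.1 → R (v, b.1) = r + 2)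

/-- The size of the network (total length of the flow paths). -/
def size (G : UFN V k) : ℕ := ∑ i : Fin k, ((G.old i).length + (G.new i).length)

end UFN

end FlowUpdate

/-!
Let `(a, z)` be a block of pair `i`, with update segment `a :: qn ++ [z]` and old segment
`a :: qo ++ [z]`; since `a` and `z` are consecutive common vertices, the inner vertices of either
segment avoid the other path. As the pair forms a DAG, every transient `s`-`t` path passes through
every common vertex, in particular through `a`. Resolving `a` alone in its round, the transient
path leaves `a` by its new edge and is then forced along `qn`, whose vertices have no old edges:
so all of them were updated in earlier rounds. Symmetrically, if some `w ∈ qo` were updated no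
later than `a`, resolving `w` alone in its round would force the transient path from the
not yet updated `a` along `qo` to `w`, whose old edge is no longer active. Hence the rounds of
`qn` precede that of `a`, which precedes those of `qo`.
-/

namespace FlowUpdate

variable {V : Type}

theorem mem_edgesOf_iff {p : List V} {u v : V} :
    (u, v) ∈ edgesOf p ↔ ∃ l₁ l₂, p = l₁ ++ u :: v :: l₂ := by
  induction p with
  | nil => simp [edgesOf]
  | cons x p ih =>
    cases p with
    | nil =>
      simp only [edgesOf, List.tail_cons, List.zip_nil_right, List.not_mem_nil, false_iff]
      rintro ⟨l₁, l₂, h⟩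
      have := congrArg List.length h
      simp only [List.length_append, List.length_cons, List.length_nil] at this
      omega
    | cons y p =>
      rw [show edgesOf (x :: y :: p) = (x, y) :: edgesOf (y :: p) from rfl, List.mem_cons, ih]
      constructor
      · rintro (h | ⟨l₁, l₂, h⟩)
        · obtain ⟨rfl, rfl⟩ := Prod.mk.inj h
          exact ⟨[], p, rfl⟩
        · exact ⟨x :: l₁, l₂, by rw [h, List.cons_append]⟩
      · rintro ⟨_ | ⟨w, l₁⟩, l₂, h⟩
        · simp_all
        · simp only [List.cons_append, List.cons.injEq] at h
          exact Or.inr ⟨l₁, l₂, h.2⟩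

theorem mem_of_mem_edgesOf {p : List V} {u v : V} (h : (u, v) ∈ edgesOf p) :
    u ∈ p ∧ v ∈ p := by
  obtain ⟨l₁, l₂, rfl⟩ := mem_edgesOf_iff.1 h
  simp

theorem length_edgesOf (p : List V) : (edgesOf p).length = p.length - 1 := by
  simp only [edgesOf, List.length_zip, List.length_tail]
  omega

theorem edgesOf_subset_of_infix {l p : List V} (h : l <:+: p) : edgesOf l ⊆ edgesOf p := by
  obtain ⟨s, t, rfl⟩ := h
  rintro ⟨u, v⟩ he
  obtain ⟨l₁, l₂, rfl⟩ := mem_edgesOf_iff.1 he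
  exact mem_edgesOf_iff.2 ⟨s ++ l₁, l₂ ++ t, by simp⟩

theorem isChain_iff_forall_mem_edgesOf {R : V → V → Prop} {p : List V} :
    p.IsChain R ↔ ∀ e ∈ edgesOf p, R e.1 e.2 := by
  rw [List.isChain_iff_forall_rel_of_append_cons_cons]
  exact ⟨fun h _ he => let ⟨_, _, hp⟩ := mem_edgesOf_iff.1 he; h hp,
    fun h a b l₁ l₂ hp => h (a, b) (mem_edgesOf_iff.2 ⟨l₁, l₂, hp⟩)⟩

theorem exists_mem_edgesOf_of_ne {p : List V} {v t : V} (ht : p.getLast? = some t)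
    (hv : v ∈ p) (hvt : v ≠ t) : ∃ w, (v, w) ∈ edgesOf p := by
  obtain ⟨l₁, _ | ⟨w, l₂⟩, rfl⟩ := List.append_of_mem hv
  · exact absurd (by simpa using ht) hvt
  · exact ⟨w, mem_edgesOf_iff.2 ⟨l₁, l₂, rfl⟩⟩

theorem eq_of_mem_edgesOf {p : List V} (hp : p.Nodup) {v w w' : V}
    (hw : (v, w) ∈ edgesOf p) (hw' : (v, w') ∈ edgesOf p) : w = w' := by
  obtain ⟨l₁, l₂, rfl⟩ := mem_edgesOf_iff.1 hw
  obtain ⟨m₁, m₂, h⟩ := mem_edgesOf_iff.1 hw'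
  have hv : v ∉ l₁ ++ w :: l₂ := (List.nodup_cons.1 (List.nodup_middle.1 hp)).1
  rw [List.mem_append, not_or] at hv
  obtain ⟨-, -, h⟩ := (List.append_cons_inj_of_notMem hv.1 hv.2).1 h
  exact (List.cons.inj h).1

section Ranked

variable {ord : V → ℕ} {p : List V}

theorem pairwise_of_forall_mem_edgesOf (h : ∀ e ∈ edgesOf p, ord e.1 < ord e.2) :
    p.Pairwise (ord · < ord ·) :=
  List.pairwise_map.1 ((List.isChain_map ord).2 (isChain_iff_forall_mem_edgesOf.2 h)).pairwise

theorem eq_of_ord_eq (hp : p.Pairwise (ord · < ord ·)) {x y : V} (hx : x ∈ p) (hy : y ∈ p)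
    (h : ord x = ord y) : x = y :=
  List.inj_on_of_nodup_map (List.pairwise_map.2 (hp.imp ne_of_lt)) hx hy h

theorem ord_lt_of_mem_edgesOf (hp : p.Pairwise (ord · < ord ·)) {a z : V}
    (haz : (a, z) ∈ edgesOf p) : ord a < ord z :=
  isChain_iff_forall_mem_edgesOf.1 hp.isChain _ haz

theorem le_of_mem_edgesOf_of_lt (hp : p.Pairwise (ord · < ord ·)) {a z y : V}
    (haz : (a, z) ∈ edgesOf p) (hy : y ∈ p) (hay : ord a < ord y) : ord z ≤ ord y := by
  obtain ⟨l₁, l₂, rfl⟩ := mem_edgesOf_iff.1 haz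
  simp only [List.pairwise_append, List.pairwise_cons, List.mem_cons] at hp hy
  grind

theorem ord_head_le (hp : p.Pairwise (ord · < ord ·)) {s x : V} (hs : p.head? = some s)
    (hx : x ∈ p) : ord s ≤ ord x := by
  obtain ⟨l, rfl⟩ := List.head?_eq_some_iff.1 hs
  rcases List.mem_cons.1 hx with rfl | hx
  exacts [le_rfl, (List.rel_of_pairwise_cons hp hx).le]

theorem ord_le_getLast (hp : p.Pairwise (ord · < ord ·)) {t x : V} (ht : p.getLast? = some t)
    (hx : x ∈ p) : ord x ≤ ord t := by
  obtain ⟨l, rfl⟩ := List.getLast?_eq_some_iff.1 ht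
  rcases List.mem_append.1 hx with hx | hx
  · exact (List.pairwise_append.1 hp).2.2 x hx t (List.mem_singleton_self t) |>.le
  · rw [List.mem_singleton.1 hx]

theorem exists_eq_append_of_mem_edgesOf {C P Q : List V} (hC : C.Pairwise (ord · < ord ·))
    (hP : P.Pairwise (ord · < ord ·)) (hPQ : ∀ x ∈ P, x ∈ Q → x ∈ C) {a z : V}
    (haz : (a, z) ∈ edgesOf C) (ha : a ∈ P) (hz : z ∈ P) :
    ∃ p₁ q p₂, P = p₁ ++ a :: (q ++ z :: p₂) ∧ ∀ v ∈ q, v ∉ Q := by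
  have hlt := ord_lt_of_mem_edgesOf hC haz
  obtain ⟨p₁, r, rfl⟩ := List.append_of_mem ha
  have hzr : z ∈ r := by
    simp only [List.pairwise_append, List.pairwise_cons] at hP
    simp only [List.mem_append, List.mem_cons] at hz
    grind
  obtain ⟨q, p₂, rfl⟩ := List.append_of_mem hzr
  refine ⟨p₁, q, p₂, rfl, fun v hv hvQ => ?_⟩
  have hvC := hPQ v (by simp [hv]) hvQ
  simp only [List.pairwise_append, List.pairwise_cons, List.mem_append, List.mem_cons] at hP
  have hav : ord a < ord v := hP.2.1.1 v (Or.inl hv)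
  have hvz : ord v < ord z := hP.2.1.2.2.2 v hv z (Or.inl rfl)
  exact absurd (le_of_mem_edgesOf_of_lt hC haz hvC hav) (not_le.2 hvz)

/-- Along `P` or `Q`, an edge reaching the rank of a common vertex `x` from below ends at `x`. -/
theorem mem_of_forall_mem_edgesOf {P Q T : List V}
    (hP : P.Pairwise (ord · < ord ·)) (hQ : Q.Pairwise (ord · < ord ·)) {s t x : V}
    (hPs : P.head? = some s) (hPt : P.getLast? = some t) (hTs : T.head? = some s)
    (hTt : T.getLast? = some t) (hT : ∀ e ∈ edgesOf T, e ∈ edgesOf P ∨ e ∈ edgesOf Q)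
    (hxP : x ∈ P) (hxQ : x ∈ Q) : x ∈ T := by
  by_contra hxT
  have hstep : ∀ e ∈ edgesOf T, ord e.1 < ord x → ord e.2 < ord x := by
    rintro ⟨u, w⟩ he hu
    by_contra! hw
    have hwx : ∀ {L : List V}, L.Pairwise (ord · < ord ·) → x ∈ L → (u, w) ∈ edgesOf L →
        w = x := fun hL hxL huw =>
      eq_of_ord_eq hL (mem_of_mem_edgesOf huw).2 hxL
        (le_antisymm (le_of_mem_edgesOf_of_lt hL huw hxL hu) hw)
    have hwT := (mem_of_mem_edgesOf he).2
    rcases hT _ he with h | h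
    exacts [hxT (hwx hP hxP h ▸ hwT), hxT (hwx hQ hxQ h ▸ hwT)]
  have hsx : ord s < ord x := (ord_head_le hP hPs hxP).lt_of_ne fun h =>
    hxT (eq_of_ord_eq hP (List.mem_of_mem_head? hPs) hxP h ▸ List.mem_of_mem_head? hTs)
  obtain ⟨T', rfl⟩ := List.head?_eq_some_iff.1 hTs
  have htx := (isChain_iff_forall_mem_edgesOf.2 hstep).induction (fun v => ord v < ord x)
    (s :: T') (fun _ _ h => h) (fun _ => hsx) t (List.mem_of_mem_getLast? hTt)
  exact absurd (ord_le_getLast hP hPt hxP) (not_le.2 htx)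

end Ranked

/-- The path is forced along the detour `c :: q ++ [z]` of `A`, since its inner vertices have no
`B`-edges to leave by. -/
theorem forall_inner_of_mem_of_infix {A B T q : List V} {Pr : V → Prop} {t c z : V}
    (hA : A.Nodup) (htB : t ∈ B) (hTt : T.getLast? = some t)
    (hT : ∀ e ∈ edgesOf T, (e ∈ edgesOf A ∧ Pr e.1) ∨ (e ∈ edgesOf B ∧ ¬ Pr e.1))
    (hinf : c :: (q ++ [z]) <:+: A) (hq : ∀ v ∈ q, v ∉ B) (hcT : c ∈ T) (hct : c ≠ t)
    (hc : Pr c) : ∀ v ∈ q, Pr v := by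
  induction q generalizing c with
  | nil => simp
  | cons v q ih =>
    obtain ⟨w, hcw⟩ := exists_mem_edgesOf_of_ne hTt hcT hct
    have hcwA : (c, w) ∈ edgesOf A := ((hT _ hcw).resolve_right fun h => h.2 hc).1
    have hcvA : (c, v) ∈ edgesOf A :=
      edgesOf_subset_of_infix hinf (mem_edgesOf_iff.2 ⟨[], q ++ [z], rfl⟩)
    obtain rfl : w = v := eq_of_mem_edgesOf hA hcwA hcvA
    have hwB := hq w List.mem_cons_self
    have hwT := (mem_of_mem_edgesOf hcw).2
    have hwt : w ≠ t := fun h => hwB (h ▸ htB)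
    obtain ⟨w', hww'⟩ := exists_mem_edgesOf_of_ne hTt hwT hwt
    have hw : Pr w :=
      ((hT _ hww').resolve_right fun h => hwB (mem_of_mem_edgesOf h.1).1).2
    have hinf' : w :: (q ++ [z]) <:+: A := (List.suffix_cons c _).isInfix.trans hinf
    rintro x (_ | ⟨_, hx⟩)
    exacts [hw, ih hinf' (fun y hy => hq y (List.mem_cons_of_mem _ hy)) hwT hwt hw x hx]

variable [DecidableEq V]

theorem segment_eq_of_eq_append {p p₁ q p₂ : List V} {a z : V} (hp : p.Nodup)
    (h : p = p₁ ++ a :: (q ++ z :: p₂)) : segment p a z = a :: (q ++ [z]) := by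
  subst h
  simp only [List.nodup_append, List.nodup_cons, List.mem_cons, List.mem_append] at hp
  unfold segment
  rw [List.dropWhile_append_of_pos (fun x hx => by grind), List.dropWhile_cons_of_neg (by simp),
    ← List.cons_append, List.takeWhile_append_of_pos (fun x hx => by grind),
    List.takeWhile_cons_of_neg (by simp)]
  simp

theorem exists_segment_eq {ord : V → ℕ} {C P Q : List V} (hC : C.Pairwise (ord · < ord ·))
    (hP : P.Pairwise (ord · < ord ·)) (hPQ : ∀ x ∈ P, x ∈ Q → x ∈ C) {a z : V}
    (haz : (a, z) ∈ edgesOf C) (ha : a ∈ P) (hz : z ∈ P) :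
    ∃ q, segment P a z = a :: (q ++ [z]) ∧ a :: (q ++ [z]) <:+: P ∧ ∀ v ∈ q, v ∉ Q := by
  obtain ⟨p₁, q, p₂, hPeq, hq⟩ := exists_eq_append_of_mem_edgesOf hC hP hPQ haz ha hz
  exact ⟨q, segment_eq_of_eq_append ((List.pairwise_map.2 hP).nodup.of_map ord) hPeq,
    ⟨p₁, p₂, by simp [hPeq]⟩, hq⟩

namespace UFN

variable {k : ℕ} {G : UFN V k} {R : V × Fin k → ℕ}

theorem mem_commons {i : Fin k} {x : V} : x ∈ G.commons i ↔ x ∈ G.old i ∧ x ∈ G.new i := by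
  simp [commons]

theorem WellFormed.exists_ord (hWF : G.WellFormed) (i : Fin k) :
    ∃ ord : V → ℕ, (G.old i).Pairwise (ord · < ord ·) ∧ (G.new i).Pairwise (ord · < ord ·) := by
  obtain ⟨ord, hord⟩ := hWF.2.1 i
  exact ⟨ord, pairwise_of_forall_mem_edgesOf fun e he => hord e (List.mem_append_left _ he),
    pairwise_of_forall_mem_edgesOf fun e he => hord e (List.mem_append_right _ he)⟩

theorem Feasible.exists_transient (hWF : G.WellFormed) (hR : G.Feasible R) (r : ℕ)
    (S : Set (V × Fin k)) (hS : ∀ u ∈ S, R u = r) (i : Fin k) :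
    ∃ T : List V, T.getLast? = some G.t ∧
      (∀ e ∈ edgesOf T, G.active ({u | R u < r} ∪ S) i e) ∧
      ∀ x ∈ G.old i, x ∈ G.new i → x ∈ T := by
  obtain ⟨T, hT, -⟩ := hR r S hS
  obtain ⟨⟨hTs, hTt, hTE, -⟩, -, -⟩ := hT i
  replace hTE := isChain_iff_forall_mem_edgesOf.1 hTE
  obtain ⟨ord, hO, hN⟩ := hWF.exists_ord i
  obtain ⟨⟨hOs, hOt, -⟩, -⟩ := hWF.1 i
  exact ⟨T i, hTt, hTE, fun x hxO hxN => mem_of_forall_mem_edgesOf hO hN hOs hOt hTs hTt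
    (fun e he => (hTE e he).imp And.left And.left) hxO hxN⟩

theorem Feasible.round_lt_of_mem_new_detour (hWF : G.WellFormed) (hR : G.Feasible R)
    {i : Fin k} {a z : V} {q : List V} (hinf : a :: (q ++ [z]) <:+: G.new i)
    (hq : ∀ v ∈ q, v ∉ G.old i) (haO : a ∈ G.old i) (haN : a ∈ G.new i) (hat : a ≠ G.t) :
    ∀ v ∈ q, R (v, i) < R (a, i) := by
  obtain ⟨T, hTt, hTE, hT⟩ := hR.exists_transient hWF (R (a, i)) {(a, i)} (by simp) i
  obtain ⟨⟨-, hOt, -⟩, -, -, hNnd⟩ := hWF.1 i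
  have hU := forall_inner_of_mem_of_infix
    (Pr := fun v => (v, i) ∈ {u | R u < R (a, i)} ∪ {(a, i)}) hNnd
    (List.mem_of_mem_getLast? hOt) hTt (fun e he => (hTE e he).symm) hinf hq (hT a haO haN) hat
    (Or.inr rfl)
  intro v hv
  rcases hU v hv with h | h
  exacts [h, absurd ((Prod.mk.inj h).1 ▸ haO) (hq v hv)]

theorem Feasible.round_lt_of_mem_old_detour (hWF : G.WellFormed) (hR : G.Feasible R)
    {i : Fin k} {a z : V} {q : List V} (hinf : a :: (q ++ [z]) <:+: G.old i)
    (hq : ∀ v ∈ q, v ∉ G.new i) (haO : a ∈ G.old i) (haN : a ∈ G.new i) (hat : a ≠ G.t) :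
    ∀ w ∈ q, R (a, i) < R (w, i) := by
  intro w hw
  by_contra! hwa
  obtain ⟨T, hTt, hTE, hT⟩ := hR.exists_transient hWF (R (w, i)) {(w, i)} (by simp) i
  obtain ⟨⟨-, -, hOnd⟩, -, hNt, -⟩ := hWF.1 i
  have haU : (a, i) ∉ {u | R u < R (w, i)} ∪ {(w, i)} := by
    rintro (h | h)
    exacts [absurd hwa (not_le.2 h), hq w hw ((Prod.mk.inj h).1 ▸ haN)]
  have hU := forall_inner_of_mem_of_infix
    (Pr := fun v => (v, i) ∉ {u | R u < R (w, i)} ∪ {(w, i)}) hOnd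
    (List.mem_of_mem_getLast? hNt) hTt
    (fun e he => (hTE e he).imp_right fun h => ⟨h.1, not_not.2 h.2⟩) hinf hq (hT a haO haN)
    hat haU
  exact hU w hw (Or.inr rfl)

theorem IsBlk.exists_rounds (hWF : G.WellFormed) (hR : G.Feasible R) {i : Fin k} {a z : V}
    (hb : G.IsBlk (i, a, z)) :
    ∃ qn qo : List V, G.blkNewSeg (i, a, z) = a :: (qn ++ [z]) ∧
      G.blkOldSeg (i, a, z) = a :: (qo ++ [z]) ∧
      (∀ v ∈ qn, R (v, i) < R (a, i)) ∧ ∀ w ∈ qo, R (a, i) < R (w, i) := by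
  obtain ⟨ord, hO, hN⟩ := hWF.exists_ord i
  have hC : (G.commons i).Pairwise (ord · < ord ·) := hO.sublist List.filter_sublist
  have hb' : (a, z) ∈ edgesOf (G.commons i) := hb
  obtain ⟨haC, hzC⟩ := mem_of_mem_edgesOf hb'
  rw [mem_commons] at haC hzC
  obtain ⟨qn, hsegN, hinfN, hqn⟩ := exists_segment_eq hC hN
    (fun x hxN hxO => mem_commons.2 ⟨hxO, hxN⟩) hb' haC.2 hzC.2
  obtain ⟨qo, hsegO, hinfO, hqo⟩ := exists_segment_eq hC hO
    (fun x hxO hxN => mem_commons.2 ⟨hxO, hxN⟩) hb' haC.1 hzC.1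
  have hat : a ≠ G.t := by
    rintro rfl
    exact absurd (ord_le_getLast hO (hWF.1 i).1.2.1 hzC.1)
      (not_le.2 (ord_lt_of_mem_edgesOf hC hb'))
  exact ⟨qn, qo, hsegN, hsegO, hR.round_lt_of_mem_new_detour hWF hinfN hqn haC.1 haC.2 hat,
    hR.round_lt_of_mem_old_detour hWF hinfO hqo haC.1 haC.2 hat⟩

end UFN

end FlowUpdate

open FlowUpdate in
/-- If a block has at least 2 old-flow edges and at least 2
update-flow edges, its updates occupy at least 3 distinct rounds in any
feasible update sequence; and a nontrivial block (whose old- and update-path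
edges differ) always requires at least 2 distinct rounds. -/
theorem stmt3 {V : Type} [DecidableEq V] {k : ℕ} (G : UFN V k)
    (hWF : G.WellFormed) (R : V × Fin k → ℕ) (hR : G.Feasible R)
    (b : UFN.Blk V k) (hb : G.IsBlk b) :
    (2 ≤ (edgesOf (G.blkOldSeg b)).length → 2 ≤ (edgesOf (G.blkNewSeg b)).length →
      3 ≤ (((G.blkNewSeg b).dropLast ++ (G.blkOldSeg b).dropLast).map
            (fun v => R (v, b.1))).toFinset.card) ∧
    (edgesOf (G.blkOldSeg b) ≠ edgesOf (G.blkNewSeg b) →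
      2 ≤ (((G.blkNewSeg b).dropLast ++ (G.blkOldSeg b).dropLast).map
            (fun v => R (v, b.1))).toFinset.card) := by
  obtain ⟨i, a, z⟩ := b
  obtain ⟨qn, qo, hN, hO, hqn, hqo⟩ := hb.exists_rounds hWF hR
  have hdrop : ∀ q : List V, (a :: (q ++ [z])).dropLast = a :: q := fun q => by
    rw [← List.cons_append, List.dropLast_concat]
  simp only [hN, hO, hdrop, length_edgesOf]
  have hmem : ∀ v ∈ a :: qn ++ a :: qo,
      R (v, i) ∈ ((a :: qn ++ a :: qo).map fun v => R (v, i)).toFinset :=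
    fun v hv => List.mem_toFinset.2 (List.mem_map_of_mem hv)
  refine ⟨fun h2o h2n => ?_, fun hne => ?_⟩
  · obtain ⟨v, hv⟩ := List.exists_mem_of_ne_nil qn (by rintro rfl; simp at h2n)
    obtain ⟨w, hw⟩ := List.exists_mem_of_ne_nil qo (by rintro rfl; simp at h2o)
    exact Finset.two_lt_card.2 ⟨_, hmem v (by simp [hv]), _, hmem a (by simp), _,
      hmem w (by simp [hw]), (hqn v hv).ne, ((hqn v hv).trans (hqo w hw)).ne, (hqo w hw).ne⟩
  · obtain ⟨v, hv, hva⟩ : ∃ v ∈ a :: qn ++ a :: qo, R (v, i) ≠ R (a, i) := by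
      rcases qn with _ | ⟨v, qn⟩
      · rcases qo with _ | ⟨w, qo⟩
        · exact absurd rfl hne
        · exact ⟨w, by simp, (hqo w (by simp)).ne'⟩
      · exact ⟨v, by simp, (hqn v (by simp)).ne⟩
    exact Finset.one_lt_card.2 ⟨_, hmem v hv, _, hmem a (by simp), hva⟩
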